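/- arXiv:1311.1230 — 6 statements merged into one kernel-verified Lean document; each statement's English description precedes it below -/
import Mathlib

section
/- Let h : [0,∞) → [0,∞) be a non-increasing measurable function, let 0 < α₁ ≤ α₂ < ∞ and r > 0. Then there is a constant c depending only on α₁, α₂, r such that for every λ ≥ 0, (∫_λ^∞ (μ^r h(μ))^{α₂} dμ/μ)^{1/α₂} ≤ λ^r h(λ) + c (∫_λ^∞ (μ^r h(μ))^{α₁} dμ/μ)^{1/α₁}. -/
/-!
Write `X m = m ^ r * h m` and `I α = ∫_l^∞ X ^ α dm / m`. Since `h` is non-increasing, the part of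
`I α₁` over `(l, μ)` is at least `h μ ^ α₁ * (μ ^ (r α₁) - l ^ (r α₁)) / (r α₁)`, hence
`X μ ^ α₁ ≤ X l ^ α₁ + r α₁ * I α₁`, so on `(l, ∞)` the function `X` is bounded by
`M = 2 ^ (1 / α₁) * (X l + (r α₁ * I α₁) ^ (1 / α₁))`. Splitting `X ^ α₂ = X ^ (α₂ - α₁) * X ^ α₁`
gives `I α₂ ≤ M ^ (α₂ - α₁) * I α₁`. Moving the factor `2 ^ (1 / α₁)` of `M` onto the `I α₁` term
and using `x ^ s * y ^ t ≤ (x + y) ^ (s + t)` bounds this by `(X l + c * I α₁ ^ (1 / α₁)) ^ α₂`,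
with coefficient exactly one in front of `X l`.
-/

open MeasureTheory ENNReal Set

namespace ENNReal

theorem rpow_mul_rpow_le_add_rpow_add (x y : ℝ≥0∞) {s t : ℝ} (hs : 0 ≤ s) (ht : 0 ≤ t) :
    x ^ s * y ^ t ≤ (x + y) ^ (s + t) := by
  rw [rpow_add_of_nonneg _ _ hs ht]
  exact mul_le_mul' (rpow_le_rpow le_self_add hs) (rpow_le_rpow le_add_self ht)

theorem le_two_rpow_mul_add_of_rpow_le_add_rpow {x y z : ℝ≥0∞} {p : ℝ} (hp : 0 < p)
    (h : z ^ p ≤ x ^ p + y ^ p) : z ≤ 2 ^ (1 / p) * (x + y) := by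
  rw [← rpow_le_rpow_iff hp, mul_rpow_of_nonneg _ _ hp.le, ← rpow_mul, one_div_mul_cancel hp.ne',
    rpow_one, two_mul]
  exact h.trans (add_le_add (rpow_le_rpow le_self_add hp.le) (rpow_le_rpow le_add_self hp.le))

theorem mul_rpow_sub_mul_rpow_le_add_rpow {K N J : ℝ≥0∞} {p q : ℝ} (hp : 0 < p) (hpq : p ≤ q) :
    (K * N) ^ (q - p) * J ^ p ≤ (N + K ^ ((q - p) / p) * J) ^ q := by
  have hqp : 0 ≤ q - p := sub_nonneg.2 hpq
  calc (K * N) ^ (q - p) * J ^ p = N ^ (q - p) * (K ^ ((q - p) / p) * J) ^ p := by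
        rw [mul_rpow_of_nonneg _ _ hqp, mul_rpow_of_nonneg _ _ hp.le, ← rpow_mul,
          div_mul_cancel₀ _ hp.ne']
        ring
    _ ≤ (N + K ^ ((q - p) / p) * J) ^ (q - p + p) :=
        rpow_mul_rpow_le_add_rpow_add _ _ hqp hp.le
    _ = _ := by rw [sub_add_cancel]

end ENNReal

theorem lintegral_Ioc_ofReal_rpow_sub_one {l μ a : ℝ} (hl : 0 ≤ l) (hlμ : l ≤ μ) (ha : 0 < a) :
    ∫⁻ m in Ioc l μ, ENNReal.ofReal (m ^ (a - 1)) = ENNReal.ofReal ((μ ^ a - l ^ a) / a) := by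
  have hint : IntegrableOn (fun m : ℝ => m ^ (a - 1)) (Ioc l μ) :=
    (intervalIntegrable_iff_integrableOn_Ioc_of_le hlμ).1
      (intervalIntegral.intervalIntegrable_rpow' (by linarith))
  rw [← ofReal_integral_eq_lintegral_ofReal hint, ← intervalIntegral.integral_of_le hlμ,
    integral_rpow (Or.inl (by linarith)), sub_add_cancel]
  exact (ae_restrict_iff' measurableSet_Ioc).2
    (ae_of_all _ fun m hm => Real.rpow_nonneg (hl.trans hm.1.le) _)

theorem AntitoneOn.ofReal_rpow_mul_le_add_setLIntegral_Ioi {g : ℝ → ℝ≥0∞} {l μ a : ℝ}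
    (hg : AntitoneOn g (Ici l)) (hl : 0 ≤ l) (hlμ : l ≤ μ) (ha : 0 < a) :
    ENNReal.ofReal μ ^ a * g μ ≤ ENNReal.ofReal l ^ a * g l +
      ENNReal.ofReal a * ∫⁻ m in Ioi l, ENNReal.ofReal m ^ a * g m / ENNReal.ofReal m := by
  have hμ : 0 ≤ μ := hl.trans hlμ
  have hpiece : ENNReal.ofReal ((μ ^ a - l ^ a) / a) * g μ ≤
      ∫⁻ m in Ioi l, ENNReal.ofReal m ^ a * g m / ENNReal.ofReal m :=
    calc ENNReal.ofReal ((μ ^ a - l ^ a) / a) * g μ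
        = ∫⁻ m in Ioc l μ, ENNReal.ofReal (m ^ (a - 1)) * g μ := by
          rw [lintegral_mul_const _ (by fun_prop), lintegral_Ioc_ofReal_rpow_sub_one hl hlμ ha]
      _ ≤ ∫⁻ m in Ioc l μ, ENNReal.ofReal m ^ a * g m / ENNReal.ofReal m := by
          refine setLIntegral_mono' measurableSet_Ioc fun m hm => ?_
          have hm0 : 0 < m := hl.trans_lt hm.1
          rw [Real.rpow_sub_one hm0.ne', ENNReal.ofReal_div_of_pos hm0,
            ENNReal.ofReal_rpow_of_pos hm0, div_eq_mul_inv, div_eq_mul_inv, mul_right_comm]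
          gcongr
          exact hg (mem_Ici.2 hm.1.le) (mem_Ici.2 hlμ) hm.2
      _ ≤ _ := lintegral_mono_set Ioc_subset_Ioi_self
  have hsplit : ENNReal.ofReal μ ^ a =
      ENNReal.ofReal l ^ a + ENNReal.ofReal a * ENNReal.ofReal ((μ ^ a - l ^ a) / a) := by
    rw [← ENNReal.ofReal_mul ha.le, mul_div_cancel₀ _ ha.ne',
      ENNReal.ofReal_rpow_of_nonneg hl ha.le, ENNReal.ofReal_rpow_of_nonneg hμ ha.le,
      ← ENNReal.ofReal_add (Real.rpow_nonneg hl a) (sub_nonneg.2 (Real.rpow_le_rpow hl hlμ ha.le)),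
      add_sub_cancel]
  rw [hsplit, add_mul, mul_assoc]
  gcongr
  exact hg (mem_Ici.2 le_rfl) (mem_Ici.2 hlμ) hlμ

theorem AntitoneOn.rpow_ofReal_rpow_mul_le_add_setLIntegral_Ioi {h : ℝ → ℝ≥0∞} {l μ r α : ℝ}
    (hh : AntitoneOn h (Ici l)) (hl : 0 ≤ l) (hlμ : l ≤ μ) (hr : 0 < r) (hα : 0 < α) :
    (ENNReal.ofReal μ ^ r * h μ) ^ α ≤ (ENNReal.ofReal l ^ r * h l) ^ α +
      ENNReal.ofReal (r * α) *
        ∫⁻ m in Ioi l, (ENNReal.ofReal m ^ r * h m) ^ α / ENNReal.ofReal m := by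
  have hpow : ∀ m, (ENNReal.ofReal m ^ r * h m) ^ α = ENNReal.ofReal m ^ (r * α) * h m ^ α :=
    fun m => by rw [mul_rpow_of_nonneg _ _ hα.le, ← rpow_mul]
  simp_rw [hpow]
  exact AntitoneOn.ofReal_rpow_mul_le_add_setLIntegral_Ioi
    (fun x hx y hy hxy => rpow_le_rpow (hh hx hy hxy) hα.le) hl hlμ (by positivity)

theorem lintegral_rpow_div_le_rpow_sub_mul {α : Type*} [MeasurableSpace α] {μ : Measure α}
    {f w : α → ℝ≥0∞} {M : ℝ≥0∞} {p q : ℝ} (hp : 0 ≤ p) (hpq : p ≤ q)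
    (hf : Measurable f) (hw : Measurable w) (hfM : ∀ᵐ x ∂μ, f x ≤ M) :
    ∫⁻ x, f x ^ q / w x ∂μ ≤ M ^ (q - p) * ∫⁻ x, f x ^ p / w x ∂μ := by
  have hqp : 0 ≤ q - p := sub_nonneg.2 hpq
  rw [← lintegral_const_mul _ (by fun_prop)]
  refine lintegral_mono_ae (hfM.mono fun x hx => ?_)
  rw [← mul_div_assoc, ← sub_add_cancel q p, rpow_add_of_nonneg _ _ hqp hp,
    add_sub_cancel_right]
  gcongr

/-- Reverse-Hölder type inequality for tail integrals of non-increasing functions. -/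
theorem reverse_holder_tail (α₁ α₂ r : ℝ) (hα₁ : 0 < α₁) (hα₁₂ : α₁ ≤ α₂) (hr : 0 < r) :
    ∃ c : ℝ≥0∞, 0 < c ∧ c ≠ ⊤ ∧
      ∀ h : ℝ → ℝ≥0∞, Measurable h → AntitoneOn h (Ici 0) →
        ∀ l : ℝ, 0 ≤ l →
          (∫⁻ m in Ioi l, (ENNReal.ofReal m ^ r * h m) ^ α₂ / ENNReal.ofReal m) ^ (1/α₂)
            ≤ ENNReal.ofReal l ^ r * h l +
              c * (∫⁻ m in Ioi l, (ENNReal.ofReal m ^ r * h m) ^ α₁ / ENNReal.ofReal m) ^ (1/α₁) := by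
  set b := ENNReal.ofReal (r * α₁) ^ (1 / α₁)
  set K : ℝ≥0∞ := 2 ^ (1 / α₁)
  refine ⟨b + K ^ ((α₂ - α₁) / α₁), ?_, ?_, ?_⟩
  · exact (rpow_pos (ofReal_pos.2 (by positivity)) ofReal_ne_top).trans_le le_self_add
  · have hK : K ≠ ⊤ := rpow_ne_top_of_nonneg (by positivity) ofNat_ne_top
    exact add_ne_top.2 ⟨rpow_ne_top_of_nonneg (by positivity) ofReal_ne_top,
      rpow_ne_top_of_nonneg (div_nonneg (sub_nonneg.2 hα₁₂) hα₁.le) hK⟩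
  intro h hh hanti l hl
  set X : ℝ → ℝ≥0∞ := fun m => ENNReal.ofReal m ^ r * h m
  set I₁ := ∫⁻ m in Ioi l, X m ^ α₁ / ENNReal.ofReal m
  set J := I₁ ^ (1 / α₁)
  have hbJ : (b * J) ^ α₁ = ENNReal.ofReal (r * α₁) * I₁ := by
    rw [mul_rpow_of_nonneg _ _ hα₁.le, ← rpow_mul, ← rpow_mul, one_div_mul_cancel hα₁.ne',
      rpow_one, rpow_one]
  have hsup : ∀ m ∈ Ioi l, X m ≤ K * (X l + b * J) := fun m hm =>
    le_two_rpow_mul_add_of_rpow_le_add_rpow hα₁ <| hbJ ▸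
      (hanti.mono (Ici_subset_Ici.2 hl)).rpow_ofReal_rpow_mul_le_add_setLIntegral_Ioi
        hl hm.le hr hα₁
  have hI₂ := lintegral_rpow_div_le_rpow_sub_mul hα₁.le hα₁₂ (by fun_prop : Measurable X)
    measurable_ofReal ((ae_restrict_iff' (μ := volume) measurableSet_Ioi).2 (ae_of_all _ hsup))
  rw [one_div, rpow_inv_le_iff (hα₁.trans_le hα₁₂), add_mul, ← add_assoc]
  have hI₁ : I₁ = J ^ α₁ := by rw [← rpow_mul, one_div_mul_cancel hα₁.ne', rpow_one]
  exact hI₂.trans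
    (le_of_eq_of_le (by rw [← hI₁]) (mul_rpow_sub_mul_rpow_le_add_rpow hα₁ hα₁₂))
end

section
/- Let h : [0,∞) → [0,∞) be a non-increasing measurable function, let 0 < α₁ < ∞ and r > 0. Then there is a constant c depending only on α₁ and r such that for every λ ≥ 0, sup_{μ > λ} μ^r h(μ) ≤ c λ^r h(λ) + c (∫_λ^∞ (μ^r h(μ))^{α₁} dμ/μ)^{1/α₁}. -/
open MeasureTheory ENNReal Set Filter

/-- Endpoint reverse-Hölder inequality: the tail supremum of `μ^r h(μ)` is controlled by the
value at `λ` plus the tail integral at exponent `α₁`. -/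
theorem reverse_holder_tail_sup (α₁ r : ℝ) (hα₁ : 0 < α₁) (hr : 0 < r) :
    ∃ c : ℝ≥0∞, 0 < c ∧ c ≠ ⊤ ∧
      ∀ h : ℝ → ℝ≥0∞, Measurable h → AntitoneOn h (Ici 0) →
        ∀ l : ℝ, 0 ≤ l →
          (⨆ m ∈ Ioi l, ENNReal.ofReal m ^ r * h m)
            ≤ c * (ENNReal.ofReal l ^ r * h l) +
              c * (∫⁻ m in Ioi l, (ENNReal.ofReal m ^ r * h m) ^ α₁ / ENNReal.ofReal m) ^ (1/α₁) := by
  refine ⟨(2 : ℝ≥0∞) ^ (r + 1/α₁), ?_, ?_, ?_⟩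
  · exact ENNReal.rpow_pos (by norm_num) (by norm_num)
  · exact ENNReal.rpow_ne_top_of_nonneg (by positivity) (by norm_num)
  intro h hmeas hanti l hl
  have hinv : (0:ℝ) < 1/α₁ := by positivity
  have hcr : (2 : ℝ≥0∞) ^ r ≤ (2 : ℝ≥0∞) ^ (r + 1/α₁) :=
    ENNReal.rpow_le_rpow_of_exponent_le (by norm_num) (by linarith)
  apply iSup₂_le
  intro m hm
  simp only [mem_Ioi] at hm
  have hm0 : 0 < m := lt_of_le_of_lt hl hm
  by_cases hcase : m ≤ 2 * l
  · -- easy case: m ≤ 2l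
    have h1 : ENNReal.ofReal m ^ r * h m ≤ (2:ℝ≥0∞) ^ r * (ENNReal.ofReal l ^ r * h l) := by
      have hml : ENNReal.ofReal m ^ r ≤ (2:ℝ≥0∞)^r * ENNReal.ofReal l ^ r := by
        rw [← ENNReal.mul_rpow_of_nonneg _ _ hr.le]
        apply ENNReal.rpow_le_rpow _ hr.le
        calc ENNReal.ofReal m ≤ ENNReal.ofReal (2 * l) := ENNReal.ofReal_le_ofReal hcase
          _ = 2 * ENNReal.ofReal l := by
              rw [ENNReal.ofReal_mul (by norm_num)]; norm_num
      have hhm : h m ≤ h l := hanti hl hm0.le hm.le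
      calc ENNReal.ofReal m ^ r * h m
          ≤ ((2:ℝ≥0∞)^r * ENNReal.ofReal l ^ r) * h l := mul_le_mul' hml hhm
        _ = (2:ℝ≥0∞) ^ r * (ENNReal.ofReal l ^ r * h l) := by ring
    refine le_trans h1 (le_trans ?_ le_self_add)
    exact mul_le_mul_left hcr _
  · -- main case: m > 2l
    push_neg at hcase
    set I := ∫⁻ m in Ioi l, (ENNReal.ofReal m ^ r * h m) ^ α₁ / ENNReal.ofReal m with hI
    set B := ENNReal.ofReal (m/2) ^ r * h m with hB
    have hm2l : l < m / 2 := by linarith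
    have hm20 : 0 < m / 2 := by linarith
    have hhalf : ENNReal.ofReal (m - m/2) / ENNReal.ofReal m = ENNReal.ofReal (1/2) := by
      rw [← ENNReal.ofReal_div_of_pos hm0]
      congr 1; field_simp; ring
    -- lower bound the integral
    have key : B ^ α₁ * ENNReal.ofReal (1/2) ≤ I := by
      have hsub : Ioc (m/2) m ⊆ Ioi l := fun x hx => lt_trans hm2l hx.1
      calc B ^ α₁ * ENNReal.ofReal (1/2)
          = B ^ α₁ / ENNReal.ofReal m * ENNReal.ofReal (m - m/2) := by
            rw [← hhalf]; simp only [div_eq_mul_inv]; ring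
        _ = ∫⁻ _ in Ioc (m/2) m, B ^ α₁ / ENNReal.ofReal m := by
            rw [setLIntegral_const, Real.volume_Ioc]
        _ ≤ ∫⁻ x in Ioc (m/2) m,
              (ENNReal.ofReal x ^ r * h x) ^ α₁ / ENNReal.ofReal x := by
            apply setLIntegral_mono (by fun_prop)
            intro x hx
            apply ENNReal.div_le_div _ (ENNReal.ofReal_le_ofReal hx.2)
            apply ENNReal.rpow_le_rpow _ hα₁.le
            exact mul_le_mul'
              (ENNReal.rpow_le_rpow (ENNReal.ofReal_le_ofReal hx.1.le) hr.le)
              (hanti (hm20.trans hx.1).le hm0.le hx.2)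
        _ ≤ I := lintegral_mono_set hsub
    have hIpow : B * ENNReal.ofReal (1/2) ^ (1/α₁) ≤ I ^ (1/α₁) := by
      calc B * ENNReal.ofReal (1/2) ^ (1/α₁)
          = (B ^ α₁ * ENNReal.ofReal (1/2)) ^ (1/α₁) := by
            rw [ENNReal.mul_rpow_of_nonneg _ _ hinv.le, ← ENNReal.rpow_mul,
              mul_one_div_cancel hα₁.ne', ENNReal.rpow_one]
        _ ≤ I ^ (1/α₁) := ENNReal.rpow_le_rpow key hinv.le
    have hA : ENNReal.ofReal m ^ r * h m = (2:ℝ≥0∞)^r * B := by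
      rw [hB, ← mul_assoc, ← ENNReal.mul_rpow_of_nonneg _ _ hr.le]
      congr 2
      rw [show (2:ℝ≥0∞) = ENNReal.ofReal 2 from (ENNReal.ofReal_ofNat 2).symm,
        ← ENNReal.ofReal_mul (by norm_num)]
      congr 1; ring
    have hone : (2:ℝ≥0∞) ^ (1/α₁) * ENNReal.ofReal (1/2) ^ (1/α₁) = 1 := by
      rw [← ENNReal.mul_rpow_of_nonneg _ _ hinv.le]
      have h2 : (2:ℝ≥0∞) * ENNReal.ofReal (1/2) = 1 := by
        rw [show (2:ℝ≥0∞) = ENNReal.ofReal 2 from (ENNReal.ofReal_ofNat 2).symm,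
          ← ENNReal.ofReal_mul (by norm_num)]
        norm_num
      rw [h2, ENNReal.one_rpow]
    refine le_trans ?_ le_add_self
    rw [hA]
    calc (2:ℝ≥0∞)^r * B
        = (2:ℝ≥0∞)^r * (((2:ℝ≥0∞)^(1/α₁) * ENNReal.ofReal (1/2) ^ (1/α₁)) * B) := by
          rw [hone, one_mul]
      _ = (2:ℝ≥0∞)^(r+1/α₁) * (B * ENNReal.ofReal (1/2)^(1/α₁)) := by
          rw [ENNReal.rpow_add _ _ (by norm_num) (by norm_num)]; ring
      _ ≤ (2:ℝ≥0∞)^(r+1/α₁) * I^(1/α₁) := mul_le_mul_right hIpow _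
end

section
/- For p > 1 and s ∈ [0,1], define V_s : ℝ^n → ℝ^n by V_s(z) = (s² + |z|²)^{(p−2)/4} z. Then there exists a constant c_V depending only on n and p such that for all ξ₁, ξ₂ ∈ ℝ^n not both zero when s = 0, (1/c_V) |ξ₁ − ξ₂|² ≤ |V_s(ξ₁) − V_s(ξ₂)|² / (s² + |ξ₁|² + |ξ₂|²)^{(p−2)/2} ≤ c_V |ξ₁ − ξ₂|². -/
open Set

/-- The auxiliary vector field `V_s(z) = (s² + |z|²)^((p-2)/4) z`. -/
noncomputable def Vfun {n : ℕ} (p s : ℝ) (z : EuclideanSpace ℝ (Fin n)) :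
    EuclideanSpace ℝ (Fin n) :=
  ((s^2 + ‖z‖^2) ^ ((p-2)/4)) • z

/-!
Put `x = |ξ₁| ≥ y = |ξ₂|`, `a = √(s² + x²)`, `b = √(s² + y²)` and `q = (p - 2)/2 > -1`, so that
`V_s(ξ₁) = a^q ξ₁` and `V_s(ξ₂) = b^q ξ₂`. Both `|V_s(ξ₁) - V_s(ξ₂)|²` and `|ξ₁ - ξ₂|²` are affine in
`⟪ξ₁, ξ₂⟫ ∈ [-xy, xy]`, so it suffices to compare them at the two endpoints, i.e. to compare
`a^q x ∓ b^q y` with `a^q (x ∓ y)`. For the minus sign this is the tangent-line inequality of the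
convex (`q ≥ 0`) or concave (`q ≤ 0`) function `τ ↦ τ^(q+1)` at `a`, combined with `y ≤ b` and
`a - b ≤ x - y`; the plus sign follows because `τ ↦ (s² + τ²)^(q/2) τ` is increasing. Finally
`s² + x² ≤ s² + x² + y² ≤ 2 (s² + x²)` trades the weight `a^(2q)` for the symmetric one.
-/

open Real

theorem rpow_add_mul_sub_le_rpow {a b p : ℝ} (ha : 0 < a) (hb : 0 ≤ b) (hp : 1 ≤ p) :
    a ^ p + p * a ^ (p - 1) * (b - a) ≤ b ^ p := by
  have h := one_add_mul_self_le_rpow_one_add (s := b / a - 1)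
    (by linarith [div_nonneg hb ha.le]) hp
  rw [add_sub_cancel, div_rpow hb ha.le, le_div_iff₀ (rpow_pos_of_pos ha p)] at h
  rw [rpow_sub_one ha.ne']
  calc a ^ p + p * (a ^ p / a) * (b - a) = (1 + p * (b / a - 1)) * a ^ p := by field_simp
    _ ≤ b ^ p := h

theorem rpow_le_rpow_add_mul_sub {a b p : ℝ} (ha : 0 < a) (hb : 0 ≤ b) (hp₀ : 0 ≤ p)
    (hp₁ : p ≤ 1) : b ^ p ≤ a ^ p + p * a ^ (p - 1) * (b - a) := by
  have h := rpow_one_add_le_one_add_mul_self (s := b / a - 1)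
    (by linarith [div_nonneg hb ha.le]) hp₀ hp₁
  rw [add_sub_cancel, div_rpow hb ha.le, div_le_iff₀ (rpow_pos_of_pos ha p)] at h
  rw [rpow_sub_one ha.ne']
  calc b ^ p ≤ (1 + p * (b / a - 1)) * a ^ p := h
    _ = a ^ p + p * (a ^ p / a) * (b - a) := by field_simp

theorem rpow_le_rpow_abs_of_inv_le_of_le {c t q : ℝ} (ht : 0 < t) (hct : c⁻¹ ≤ t) (htc : t ≤ c) :
    t ^ q ≤ c ^ |q| := by
  have hc : 0 < c := ht.trans_le htc
  rcases le_total 0 q with hq | hq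
  · rw [abs_of_nonneg hq]
    exact rpow_le_rpow ht.le htc hq
  · rw [abs_of_nonpos hq, rpow_neg hc.le, ← inv_rpow hc.le]
    exact rpow_le_rpow_of_nonpos (inv_pos.2 hc) hct hq

theorem rpow_le_two_rpow_abs_mul_rpow {u w q : ℝ} (hu : 0 < u) (hw : 0 < w) (huw : u ≤ 2 * w)
    (hwu : w ≤ 2 * u) : u ^ q ≤ 2 ^ |q| * w ^ q := by
  calc u ^ q = (u / w) ^ q * w ^ q := by
        rw [div_rpow hu.le hw.le, div_mul_cancel₀ _ (rpow_pos_of_pos hw q).ne']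
    _ ≤ 2 ^ |q| * w ^ q := by
      gcongr
      apply rpow_le_rpow_abs_of_inv_le_of_le (div_pos hu hw)
      · rw [le_div_iff₀ hw]; linarith
      · rw [div_le_iff₀ hw]; linarith

theorem sqrt_add_sq_sub_sqrt_add_sq_le {c x y : ℝ} (hc : 0 ≤ c) (hy : 0 ≤ y) (hyx : y ≤ x) :
    √(c + x ^ 2) - √(c + y ^ 2) ≤ x - y := by
  have ha := sq_sqrt (show 0 ≤ c + x ^ 2 by positivity)
  have hb := sq_sqrt (show 0 ≤ c + y ^ 2 by positivity)
  have hxa : x ≤ √(c + x ^ 2) := le_sqrt_of_sq_le (by linarith)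
  have hyb : y ≤ √(c + y ^ 2) := le_sqrt_of_sq_le (by linarith)
  nlinarith [sqrt_nonneg (c + x ^ 2), sqrt_nonneg (c + y ^ 2)]

section Scalar

variable {q a b x y : ℝ}

theorem rpow_mul_sub_rpow_mul_bounds (hq : -1 < q) (ha : 0 < a) (hy : 0 ≤ y) (hyb : y ≤ b)
    (hba : b ≤ a) (hab : a - b ≤ x - y) :
    min 1 (1 + q) * a ^ q * (x - y) ≤ a ^ q * x - b ^ q * y ∧
      a ^ q * x - b ^ q * y ≤ max 1 (1 + q) * a ^ q * (x - y) := by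
  have hb : 0 ≤ b := hy.trans hyb
  have hAxy : 0 ≤ a ^ q * (x - y) := mul_nonneg (rpow_nonneg ha.le q) (by linarith)
  have hmin := mul_le_mul_of_nonneg_right (min_le_left 1 (1 + q)) hAxy
  have hmin' := mul_le_mul_of_nonneg_right (min_le_right 1 (1 + q)) hAxy
  have hmax := mul_le_mul_of_nonneg_right (le_max_left 1 (1 + q)) hAxy
  have hmax' := mul_le_mul_of_nonneg_right (le_max_right 1 (1 + q)) hAxy
  have ha₁ : a ^ (q + 1) = a ^ q * a := rpow_add_one ha.ne' q
  have hb₁ : b ^ (q + 1) = b ^ q * b := rpow_add_one' hb (by linarith)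
  have hq₁ : q + 1 - 1 = q := by ring
  rcases le_total 0 q with hq₀ | hq₀
  · have htangent := rpow_add_mul_sub_le_rpow ha hb (by linarith : 1 ≤ q + 1)
    rw [ha₁, hb₁, hq₁] at htangent
    have hBA : b ^ q ≤ a ^ q := rpow_le_rpow hb hba hq₀
    have hy' := mul_le_mul_of_nonneg_left hyb (sub_nonneg.2 hBA)
    have hab' := mul_le_mul_of_nonneg_left hab (mul_nonneg hq₀ (rpow_nonneg ha.le q))
    have hy'' := mul_le_mul_of_nonneg_right hBA hy
    constructor <;> linarith
  · have htangent := rpow_le_rpow_add_mul_sub ha hb (by linarith : 0 ≤ q + 1) (by linarith)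
    rw [ha₁, hb₁, hq₁] at htangent
    have hab' := mul_le_mul_of_nonneg_left hab
      (mul_nonneg (neg_nonneg.2 hq₀) (rpow_nonneg ha.le q))
    rcases hy.eq_or_lt with rfl | hy₀
    · constructor <;> linarith
    · have hAB := sub_nonneg.2 (rpow_le_rpow_of_nonpos (hy₀.trans_le hyb) hba hq₀)
      have hy' := mul_le_mul_of_nonneg_left hyb hAB
      have hy'' := mul_nonneg hAB hy
      constructor <;> linarith

theorem rpow_mul_add_rpow_mul_bounds (hq : -1 < q) (ha : 0 < a) (hy : 0 ≤ y) (hyb : y ≤ b)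
    (hba : b ≤ a) (hab : a - b ≤ x - y) :
    a ^ q * (x + y) / 2 ≤ a ^ q * x + b ^ q * y ∧ a ^ q * x + b ^ q * y ≤ 2 * a ^ q * (x + y) := by
  have hAxy : 0 ≤ a ^ q * (x - y) := mul_nonneg (rpow_nonneg ha.le q) (by linarith)
  have hBy : 0 ≤ b ^ q * y := mul_nonneg (rpow_nonneg (hy.trans hyb) q) hy
  have hmono : b ^ q * y ≤ a ^ q * x := by
    linarith [(rpow_mul_sub_rpow_mul_bounds hq ha hy hyb hba hab).1,
      mul_nonneg (le_min zero_le_one (by linarith : 0 ≤ 1 + q)) hAxy]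
  constructor <;> linarith [mul_nonneg (rpow_nonneg ha.le q) hy]

theorem rpow_mul_sub_add_rpow_mul_sq_bounds (hq : -1 < q) (ha : 0 < a) (hy : 0 ≤ y)
    (hyb : y ≤ b) (hba : b ≤ a) (hab : a - b ≤ x - y) :
    (min 1 (1 + q) / 2) ^ 2 * (a ^ q) ^ 2 * (x - y) ^ 2 ≤ (a ^ q * x - b ^ q * y) ^ 2 ∧
      (a ^ q * x - b ^ q * y) ^ 2 ≤ (2 * max 1 (1 + q)) ^ 2 * (a ^ q) ^ 2 * (x - y) ^ 2 ∧
      (min 1 (1 + q) / 2) ^ 2 * (a ^ q) ^ 2 * (x + y) ^ 2 ≤ (a ^ q * x + b ^ q * y) ^ 2 ∧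
      (a ^ q * x + b ^ q * y) ^ 2 ≤ (2 * max 1 (1 + q)) ^ 2 * (a ^ q) ^ 2 * (x + y) ^ 2 := by
  obtain ⟨hm₁, hm₂⟩ := rpow_mul_sub_rpow_mul_bounds hq ha hy hyb hba hab
  obtain ⟨hp₁, hp₂⟩ := rpow_mul_add_rpow_mul_bounds hq ha hy hyb hba hab
  set A := a ^ q
  have hA : 0 ≤ A := rpow_nonneg ha.le q
  have hℓ : 0 < min 1 (1 + q) := lt_min one_pos (by linarith)
  have hℓ₁ : min 1 (1 + q) ≤ 1 := min_le_left _ _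
  have hL₁ : 1 ≤ max 1 (1 + q) := le_max_left _ _
  have hAm : 0 ≤ A * (x - y) := mul_nonneg hA (by linarith)
  have hAp : 0 ≤ A * (x + y) := mul_nonneg hA (by linarith)
  have hm₀ : 0 ≤ min 1 (1 + q) / 2 * A * (x - y) := by rw [mul_assoc]; positivity
  have hp₀ : 0 ≤ min 1 (1 + q) / 2 * A * (x + y) := by rw [mul_assoc]; positivity
  refine ⟨?_, ?_, ?_, ?_⟩
  · calc _ = (min 1 (1 + q) / 2 * A * (x - y)) ^ 2 := by ring
      _ ≤ _ := pow_le_pow_left₀ hm₀ (by nlinarith) 2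
  · calc _ ≤ (2 * max 1 (1 + q) * A * (x - y)) ^ 2 :=
        pow_le_pow_left₀ (by linarith) (by nlinarith) 2
      _ = _ := by ring
  · calc _ = (min 1 (1 + q) / 2 * A * (x + y)) ^ 2 := by ring
      _ ≤ _ := pow_le_pow_left₀ hp₀ (by nlinarith) 2
  · calc _ ≤ (2 * max 1 (1 + q) * A * (x + y)) ^ 2 :=
        pow_le_pow_left₀ (by linarith) (by nlinarith) 2
      _ = _ := by ring

end Scalar

section InnerProductSpace

variable {E : Type*} [NormedAddCommGroup E] [InnerProductSpace ℝ E]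

theorem norm_smul_sub_smul_sq (α β : ℝ) (u v : E) :
    ‖α • u - β • v‖ ^ 2 = α ^ 2 * ‖u‖ ^ 2 - 2 * (α * β) * inner ℝ u v + β ^ 2 * ‖v‖ ^ 2 := by
  rw [norm_sub_sq_real, norm_smul, norm_smul, real_inner_smul_left, real_inner_smul_right,
    mul_pow, mul_pow, Real.norm_eq_abs, Real.norm_eq_abs, sq_abs, sq_abs]
  ring

theorem le_norm_smul_sub_smul_sq {α β k : ℝ} {u v : E}
    (h₁ : k * (‖u‖ - ‖v‖) ^ 2 ≤ (α * ‖u‖ - β * ‖v‖) ^ 2)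
    (h₂ : k * (‖u‖ + ‖v‖) ^ 2 ≤ (α * ‖u‖ + β * ‖v‖) ^ 2) :
    k * ‖u - v‖ ^ 2 ≤ ‖α • u - β • v‖ ^ 2 := by
  rw [norm_smul_sub_smul_sq, norm_sub_sq_real]
  obtain ⟨ht₁, ht₂⟩ := abs_le.1 (abs_real_inner_le_norm u v)
  rcases le_total k (α * β) with h | h
  · nlinarith [mul_nonneg (sub_nonneg.2 h) (sub_nonneg.2 ht₂)]
  · nlinarith [mul_nonneg (sub_nonneg.2 h) (neg_le_iff_add_nonneg.1 ht₁)]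

theorem norm_smul_sub_smul_sq_le {α β K : ℝ} {u v : E}
    (h₁ : (α * ‖u‖ - β * ‖v‖) ^ 2 ≤ K * (‖u‖ - ‖v‖) ^ 2)
    (h₂ : (α * ‖u‖ + β * ‖v‖) ^ 2 ≤ K * (‖u‖ + ‖v‖) ^ 2) :
    ‖α • u - β • v‖ ^ 2 ≤ K * ‖u - v‖ ^ 2 := by
  rw [norm_smul_sub_smul_sq, norm_sub_sq_real]
  obtain ⟨ht₁, ht₂⟩ := abs_le.1 (abs_real_inner_le_norm u v)
  rcases le_total K (α * β) with h | h
  · nlinarith [mul_nonneg (sub_nonneg.2 h) (neg_le_iff_add_nonneg.1 ht₁)]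
  · nlinarith [mul_nonneg (sub_nonneg.2 h) (sub_nonneg.2 ht₂)]

theorem norm_rpow_smul_sub_sq_bounds_of_norm_le {r s : ℝ} (hr : -1 / 2 < r) {ξ₁ ξ₂ : E}
    (h₂₁ : ‖ξ₂‖ ≤ ‖ξ₁‖) (hs : 0 < s ^ 2 + ‖ξ₁‖ ^ 2) :
    (min 1 (1 + 2 * r) / 2) ^ 2 * (s ^ 2 + ‖ξ₁‖ ^ 2) ^ (2 * r) * ‖ξ₁ - ξ₂‖ ^ 2 ≤
        ‖(s ^ 2 + ‖ξ₁‖ ^ 2) ^ r • ξ₁ - (s ^ 2 + ‖ξ₂‖ ^ 2) ^ r • ξ₂‖ ^ 2 ∧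
      ‖(s ^ 2 + ‖ξ₁‖ ^ 2) ^ r • ξ₁ - (s ^ 2 + ‖ξ₂‖ ^ 2) ^ r • ξ₂‖ ^ 2 ≤
        (2 * max 1 (1 + 2 * r)) ^ 2 * (s ^ 2 + ‖ξ₁‖ ^ 2) ^ (2 * r) * ‖ξ₁ - ξ₂‖ ^ 2 := by
  have hsqrt (t : ℝ) : (s ^ 2 + t ^ 2) ^ r = √(s ^ 2 + t ^ 2) ^ (2 * r) := by
    rw [sqrt_eq_rpow, ← rpow_mul (by positivity)]
    ring_nf
  have hsq : (s ^ 2 + ‖ξ₁‖ ^ 2) ^ (2 * r) = (√(s ^ 2 + ‖ξ₁‖ ^ 2) ^ (2 * r)) ^ 2 := by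
    rw [← hsqrt, ← rpow_mul_natCast hs.le]
    ring_nf
  rw [hsqrt, hsqrt, hsq]
  have hy : 0 ≤ ‖ξ₂‖ := norm_nonneg _
  obtain ⟨hm₁, hm₂, hp₁, hp₂⟩ := rpow_mul_sub_add_rpow_mul_sq_bounds (q := 2 * r) (by linarith)
    (sqrt_pos.2 hs) hy (le_sqrt_of_sq_le (by nlinarith)) (sqrt_le_sqrt (by nlinarith))
    (sqrt_add_sq_sub_sqrt_add_sq_le (sq_nonneg s) hy h₂₁)
  exact ⟨le_norm_smul_sub_smul_sq hm₁ hp₁, norm_smul_sub_smul_sq_le hm₂ hp₂⟩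

theorem exists_norm_rpow_smul_sub_sq_comparison {r : ℝ} (hr : -1 / 2 < r) :
    ∃ C : ℝ, 1 ≤ C ∧ ∀ (s : ℝ) (ξ₁ ξ₂ : E), 0 < s ^ 2 + ‖ξ₁‖ ^ 2 + ‖ξ₂‖ ^ 2 →
      C⁻¹ * (s ^ 2 + ‖ξ₁‖ ^ 2 + ‖ξ₂‖ ^ 2) ^ (2 * r) * ‖ξ₁ - ξ₂‖ ^ 2 ≤
          ‖(s ^ 2 + ‖ξ₁‖ ^ 2) ^ r • ξ₁ - (s ^ 2 + ‖ξ₂‖ ^ 2) ^ r • ξ₂‖ ^ 2 ∧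
        ‖(s ^ 2 + ‖ξ₁‖ ^ 2) ^ r • ξ₁ - (s ^ 2 + ‖ξ₂‖ ^ 2) ^ r • ξ₂‖ ^ 2 ≤
          C * (s ^ 2 + ‖ξ₁‖ ^ 2 + ‖ξ₂‖ ^ 2) ^ (2 * r) * ‖ξ₁ - ξ₂‖ ^ 2 := by
  set m := min 1 (1 + 2 * r) / 2 with hm
  set M := 2 * max 1 (1 + 2 * r) with hM
  set K : ℝ := 2 ^ |2 * r|
  have hm₀ : 0 < m := div_pos (lt_min one_pos (by linarith)) two_pos
  have hm₁ : m ≤ 1 := by linarith [min_le_left 1 (1 + 2 * r)]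
  have hM₁ : 1 ≤ M := by linarith [le_max_left 1 (1 + 2 * r)]
  have hK : 1 ≤ K := one_le_rpow one_le_two (abs_nonneg _)
  have hMm : M ^ 2 ≤ (M / m) ^ 2 := by gcongr; exact le_div_self (by linarith) hm₀ hm₁
  refine ⟨K * (M / m) ^ 2, one_le_mul_of_one_le_of_one_le hK (by nlinarith), ?_⟩
  intro s ξ₁ ξ₂ hD
  wlog h₂₁ : ‖ξ₂‖ ≤ ‖ξ₁‖ generalizing ξ₁ ξ₂
  · have := this ξ₂ ξ₁ (by linarith) (le_of_not_ge h₂₁)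
    rwa [norm_sub_rev ξ₂, norm_sub_rev (_ • ξ₂), add_right_comm (s ^ 2)] at this
  have hsq : ‖ξ₂‖ ^ 2 ≤ ‖ξ₁‖ ^ 2 := pow_le_pow_left₀ (norm_nonneg _) h₂₁ 2
  have hs₀ := sq_nonneg s
  have hξ₂ := sq_nonneg ‖ξ₂‖
  have hs : 0 < s ^ 2 + ‖ξ₁‖ ^ 2 := by linarith
  obtain ⟨h₁, h₂⟩ := norm_rpow_smul_sub_sq_bounds_of_norm_le hr h₂₁ hs
  rw [← hm] at h₁
  rw [← hM] at h₂
  have hw₁ := rpow_le_two_rpow_abs_mul_rpow (q := 2 * r) hD hs (by linarith) (by linarith)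
  have hw₂ := rpow_le_two_rpow_abs_mul_rpow (q := 2 * r) hs hD (by linarith) (by linarith)
  constructor
  · calc (K * (M / m) ^ 2)⁻¹ * (s ^ 2 + ‖ξ₁‖ ^ 2 + ‖ξ₂‖ ^ 2) ^ (2 * r) * ‖ξ₁ - ξ₂‖ ^ 2
        ≤ (K * (M / m) ^ 2)⁻¹ * (K * (s ^ 2 + ‖ξ₁‖ ^ 2) ^ (2 * r)) * ‖ξ₁ - ξ₂‖ ^ 2 := by gcongr
      _ = (m / M) ^ 2 * (s ^ 2 + ‖ξ₁‖ ^ 2) ^ (2 * r) * ‖ξ₁ - ξ₂‖ ^ 2 := by field_simp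
      _ ≤ m ^ 2 * (s ^ 2 + ‖ξ₁‖ ^ 2) ^ (2 * r) * ‖ξ₁ - ξ₂‖ ^ 2 := by
        gcongr; exact div_le_self hm₀.le hM₁
      _ ≤ _ := h₁
  · calc _ ≤ M ^ 2 * (s ^ 2 + ‖ξ₁‖ ^ 2) ^ (2 * r) * ‖ξ₁ - ξ₂‖ ^ 2 := h₂
      _ ≤ M ^ 2 * (K * (s ^ 2 + ‖ξ₁‖ ^ 2 + ‖ξ₂‖ ^ 2) ^ (2 * r)) * ‖ξ₁ - ξ₂‖ ^ 2 := by gcongr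
      _ ≤ K * (M / m) ^ 2 * (s ^ 2 + ‖ξ₁‖ ^ 2 + ‖ξ₂‖ ^ 2) ^ (2 * r) * ‖ξ₁ - ξ₂‖ ^ 2 := by
        rw [mul_left_comm, ← mul_assoc]
        gcongr

end InnerProductSpace

/-- Two-sided comparison between the `V`-function difference and the weighted distance. -/
theorem V_function_comparison (n : ℕ) (p : ℝ) (hp : 1 < p) :
    ∃ cV : ℝ, 1 ≤ cV ∧
      ∀ s : ℝ, s ∈ Icc (0:ℝ) 1 →
        ∀ ξ₁ ξ₂ : EuclideanSpace ℝ (Fin n), (s = 0 → ¬(ξ₁ = 0 ∧ ξ₂ = 0)) →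
          (1/cV) * ‖ξ₁ - ξ₂‖^2
              ≤ ‖Vfun p s ξ₁ - Vfun p s ξ₂‖^2 / (s^2 + ‖ξ₁‖^2 + ‖ξ₂‖^2) ^ ((p-2)/2) ∧
            ‖Vfun p s ξ₁ - Vfun p s ξ₂‖^2 / (s^2 + ‖ξ₁‖^2 + ‖ξ₂‖^2) ^ ((p-2)/2)
              ≤ cV * ‖ξ₁ - ξ₂‖^2 := by
  obtain ⟨C, hC, hcomp⟩ :=
    exists_norm_rpow_smul_sub_sq_comparison (E := EuclideanSpace ℝ (Fin n)) (r := (p - 2) / 4)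
      (by linarith)
  refine ⟨C, hC, fun s _ ξ₁ ξ₂ hξ => ?_⟩
  have hD : 0 < s ^ 2 + ‖ξ₁‖ ^ 2 + ‖ξ₂‖ ^ 2 := by
    contrapose! hξ
    have h₀ := le_antisymm hξ (by positivity)
    simp only [add_nonneg, sq_nonneg, add_eq_zero_iff_of_nonneg, pow_eq_zero_iff, ne_eq,
      OfNat.ofNat_ne_zero, not_false_eq_true, norm_eq_zero] at h₀
    tauto
  have hDq := rpow_pos_of_pos hD ((p - 2) / 2)
  obtain ⟨h₁, h₂⟩ := hcomp s ξ₁ ξ₂ hD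
  unfold Vfun
  rw [one_div, le_div_iff₀ hDq, div_le_iff₀ hDq, show (p - 2) / 2 = 2 * ((p - 2) / 4) by ring]
  exact ⟨by linarith, by linarith⟩
end

section
/- Let p > 1, s ∈ [0,1], ν > 0, and let a : ℝ^n → ℝ^n be a C¹ vector field satisfying ⟨∂a(ξ)λ, λ⟩ ≥ ν (s² + |ξ|²)^{(p−2)/2} |λ|² for all ξ, λ ∈ ℝ^n (with ξ ≠ 0 if s = 0). Then there is a constant c depending only on n, p, ν such that ⟨a(ξ₁) − a(ξ₂), ξ₁ − ξ₂⟩ ≥ (1/c) (s² + |ξ₁|² + |ξ₂|²)^{(p−2)/2} |ξ₁ − ξ₂|² for all ξ₁, ξ₂ ∈ ℝ^n not both zero when s = 0. -/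
/-!
Along the segment `γ t = ξ₂ + t • (ξ₁ - ξ₂)` the fundamental theorem of calculus writes
`⟪a ξ₁ - a ξ₂, ξ₁ - ξ₂⟫` as `∫₀¹ ⟪Da(γ t) v, v⟫ dt` with `v = ξ₁ - ξ₂`, and the ellipticity bound
holds for all but at most one `t`. For `p ≤ 2` the weight `(s² + |γ t|²)^((p-2)/2)` is at least
`(s² + |ξ₁|² + |ξ₂|²)^((p-2)/2)`, since `|γ t|² ≤ |ξ₁|² + |ξ₂|²`. For `p ≥ 2` the integrand is
nonnegative, and on the quarter of the segment next to the longer endpoint `|γ t| ≥ |ξ₁| / 2`, so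
there the weight is at least `8^(-(p-2)/2)` times the full one.
-/

open Set MeasureTheory
open scoped RealInnerProductSpace

variable {E : Type*} [NormedAddCommGroup E] [InnerProductSpace ℝ E]

lemma ae_add_smul_ne_zero {x v : E} (h : x ≠ 0 ∨ v ≠ 0) : ∀ᵐ t : ℝ, x + t • v ≠ 0 := by
  have hsub : {t : ℝ | x + t • v = 0}.Subsingleton := by
    intro t (ht : x + t • v = 0) u (hu : x + u • v = 0)
    have hv : (t - u) • v = 0 := by
      rw [sub_smul]
      linear_combination (norm := module) ht - hu
    rcases smul_eq_zero.1 hv with htu | hv0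
    · exact sub_eq_zero.1 htu
    · rw [hv0, smul_zero, add_zero] at ht
      exact absurd ⟨ht, hv0⟩ (not_and_or.2 h)
  simpa using hsub.countable.ae_notMem volume

lemma continuous_inner_fderiv_line {a : E → E} (ha : ContDiff ℝ 1 a) (x v : E) :
    Continuous fun t : ℝ => ⟪fderiv ℝ a (x + t • v) v, v⟫ := by
  fun_prop

lemma inner_sub_eq_integral_inner_fderiv {a : E → E} (ha : ContDiff ℝ 1 a) (x y : E) :
    ⟪a x - a y, x - y⟫ = ∫ t in (0:ℝ)..1, ⟪fderiv ℝ a (y + t • (x - y)) (x - y), x - y⟫ := by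
  set v := x - y
  have hderiv (t : ℝ) : HasDerivAt (fun u : ℝ => ⟪a (y + u • v), v⟫)
      ⟪fderiv ℝ a (y + t • v) v, v⟫ t := by
    have hline : HasDerivAt (fun u : ℝ => y + u • v) v t := by
      simpa using ((hasDerivAt_id t).smul_const v).const_add y
    exact ((ha.differentiable one_ne_zero _).hasFDerivAt.comp_hasDerivAt t hline).inner ℝ
      (hasDerivAt_const t v) |>.congr_deriv (by simp)
  rw [intervalIntegral.integral_eq_sub_of_hasDerivAt (fun t _ => hderiv t)
    ((continuous_inner_fderiv_line ha y v).intervalIntegrable 0 1)]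
  simp [v, inner_sub_left]

lemma norm_add_smul_sub_sq_le {x y : E} {t : ℝ} (ht : t ∈ Icc (0:ℝ) 1) :
    ‖y + t • (x - y)‖ ^ 2 ≤ ‖x‖ ^ 2 + ‖y‖ ^ 2 := by
  have hle : ‖y + t • (x - y)‖ ≤ max ‖x‖ ‖y‖ := by
    have hmem : y + t • (x - y) ∈ segment ℝ y x := by
      rw [segment_eq_image']
      exact ⟨t, ht, rfl⟩
    simpa [max_comm] using (convex_closedBall (0 : E) (max ‖x‖ ‖y‖)).segment_subset
      (by simp) (by simp) hmem
  rcases max_cases ‖x‖ ‖y‖ with ⟨hm, -⟩ | ⟨hm, -⟩ <;> rw [hm] at hle <;>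
    nlinarith [norm_nonneg (y + t • (x - y)), sq_nonneg ‖x‖, sq_nonneg ‖y‖]

lemma norm_le_two_mul_norm_add_smul_sub {x y : E} (hyx : ‖y‖ ≤ ‖x‖) {t : ℝ}
    (ht : t ∈ Icc (3/4 : ℝ) 1) : ‖x‖ ≤ 2 * ‖y + t • (x - y)‖ := by
  have hdist : ‖x - (y + t • (x - y))‖ = (1 - t) * ‖x - y‖ := by
    rw [show x - (y + t • (x - y)) = (1 - t) • (x - y) by module, norm_smul,
      Real.norm_of_nonneg (by linarith [ht.2])]
  have hxy : ‖x - y‖ ≤ 2 * ‖x‖ := (norm_sub_le x y).trans (by linarith)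
  have := norm_sub_norm_le x (y + t • (x - y))
  nlinarith [mul_le_mul_of_nonneg_left hxy (show 0 ≤ 1 - t by linarith [ht.2]), ht.1,
    norm_nonneg x]

/-- `q` stands for the exponent `(p - 2) / 2` of the `p`-Laplacian. -/
def IsPLaplacianElliptic (a : E → E) (s q ν : ℝ) : Prop :=
  ∀ ξ lam : E, (s = 0 → ξ ≠ 0) → ν * (s ^ 2 + ‖ξ‖ ^ 2) ^ q * ‖lam‖ ^ 2 ≤ ⟪fderiv ℝ a ξ lam, lam⟫

namespace IsPLaplacianElliptic

variable {a : E → E} {s q ν : ℝ} {x y : E}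

lemma ae_le_inner_fderiv_segment (hell : IsPLaplacianElliptic a s q ν)
    (hxy : s = 0 → ¬(x = 0 ∧ y = 0)) :
    ∀ᵐ t : ℝ, 0 < s ^ 2 + ‖y + t • (x - y)‖ ^ 2 ∧
      ν * (s ^ 2 + ‖y + t • (x - y)‖ ^ 2) ^ q * ‖x - y‖ ^ 2 ≤
        ⟪fderiv ℝ a (y + t • (x - y)) (x - y), x - y⟫ := by
  have hnd : ∀ᵐ t : ℝ, s = 0 → y + t • (x - y) ≠ 0 := by
    rcases eq_or_ne s 0 with hs | hs
    · have hyv : y ≠ 0 ∨ x - y ≠ 0 := by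
        by_contra! h
        exact hxy hs ⟨by simpa [h.1] using h.2, h.1⟩
      filter_upwards [ae_add_smul_ne_zero hyv] with t ht using fun _ => ht
    · exact .of_forall fun t h => absurd h hs
  filter_upwards [hnd] with t ht
  refine ⟨?_, hell _ _ ht⟩
  rcases eq_or_ne s 0 with hs | hs
  · have := norm_pos_iff.2 (ht hs)
    positivity
  · positivity

lemma inner_sub_ge_of_nonpos (hell : IsPLaplacianElliptic a s q ν) (ha : ContDiff ℝ 1 a)
    (hq : q ≤ 0) (hν : 0 ≤ ν) (hxy : s = 0 → ¬(x = 0 ∧ y = 0)) :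
    ν * (s ^ 2 + ‖x‖ ^ 2 + ‖y‖ ^ 2) ^ q * ‖x - y‖ ^ 2 ≤ ⟪a x - a y, x - y⟫ := by
  have hbound : ∀ᵐ t ∂volume.restrict (Icc (0 : ℝ) 1),
      ν * (s ^ 2 + ‖x‖ ^ 2 + ‖y‖ ^ 2) ^ q * ‖x - y‖ ^ 2 ≤
        ⟪fderiv ℝ a (y + t • (x - y)) (x - y), x - y⟫ := by
    filter_upwards [ae_restrict_mem measurableSet_Icc,
      ae_restrict_of_ae (hell.ae_le_inner_fderiv_segment hxy)] with t ht ⟨hpos, hle⟩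
    refine le_trans ?_ hle
    have := norm_add_smul_sub_sq_le (x := x) (y := y) ht
    gcongr ν * ?_ * _
    exact Real.rpow_le_rpow_of_nonpos hpos (by linarith) hq
  rw [inner_sub_eq_integral_inner_fderiv ha]
  simpa using intervalIntegral.integral_mono_ae_restrict zero_le_one intervalIntegrable_const
    ((continuous_inner_fderiv_line ha y _).intervalIntegrable 0 1) hbound

lemma inner_sub_ge_of_nonneg_of_norm_le (hell : IsPLaplacianElliptic a s q ν)
    (ha : ContDiff ℝ 1 a) (hq : 0 ≤ q) (hν : 0 ≤ ν) (hxy : s = 0 → ¬(x = 0 ∧ y = 0))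
    (hyx : ‖y‖ ≤ ‖x‖) :
    ν / (4 * 8 ^ q) * (s ^ 2 + ‖x‖ ^ 2 + ‖y‖ ^ 2) ^ q * ‖x - y‖ ^ 2 ≤ ⟪a x - a y, x - y⟫ := by
  set T := s ^ 2 + ‖x‖ ^ 2 + ‖y‖ ^ 2
  set D := fun t : ℝ => ⟪fderiv ℝ a (y + t • (x - y)) (x - y), x - y⟫
  have hD : Continuous D := continuous_inner_fderiv_line ha y (x - y)
  have hnonneg : ∀ᵐ t : ℝ, 0 ≤ D t := by
    filter_upwards [hell.ae_le_inner_fderiv_segment hxy] with t ⟨_, hle⟩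
    exact le_trans (by positivity) hle
  have hfar (t : ℝ) (ht : t ∈ Icc (3/4 : ℝ) 1) : ν * (T / 8) ^ q * ‖x - y‖ ^ 2 ≤ D t := by
    have hnorm := norm_le_two_mul_norm_add_smul_sub hyx ht
    have hnd : s = 0 → y + t • (x - y) ≠ 0 := fun hs h0 => by
      rw [h0, norm_zero, mul_zero] at hnorm
      have hx : x = 0 := norm_le_zero_iff.1 hnorm
      exact hxy hs ⟨hx, norm_le_zero_iff.1 (by simpa [hx] using hyx)⟩
    refine le_trans ?_ (hell _ _ hnd)
    gcongr ν * ?_ * _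
    exact Real.rpow_le_rpow (by positivity) (by nlinarith [norm_nonneg y]) hq
  calc ν / (4 * 8 ^ q) * T ^ q * ‖x - y‖ ^ 2 = (1 - 3/4) * (ν * (T / 8) ^ q * ‖x - y‖ ^ 2) := by
        rw [Real.div_rpow (by positivity) (by norm_num)]
        field_simp
        ring
    _ ≤ ∫ t in (3/4 : ℝ)..1, D t := by
        have := intervalIntegral.integral_mono_on (μ := volume) (by norm_num)
          intervalIntegrable_const (hD.intervalIntegrable _ _) hfar
        rwa [intervalIntegral.integral_const, smul_eq_mul] at this
    _ ≤ ∫ t in (0 : ℝ)..1, D t :=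
        intervalIntegral.integral_mono_interval (by norm_num) (by norm_num) le_rfl
          (ae_restrict_of_ae hnonneg) (hD.intervalIntegrable _ _)
    _ = ⟪a x - a y, x - y⟫ := (inner_sub_eq_integral_inner_fderiv ha x y).symm

lemma inner_sub_ge_of_nonneg (hell : IsPLaplacianElliptic a s q ν) (ha : ContDiff ℝ 1 a)
    (hq : 0 ≤ q) (hν : 0 ≤ ν) (hxy : s = 0 → ¬(x = 0 ∧ y = 0)) :
    ν / (4 * 8 ^ q) * (s ^ 2 + ‖x‖ ^ 2 + ‖y‖ ^ 2) ^ q * ‖x - y‖ ^ 2 ≤ ⟪a x - a y, x - y⟫ := by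
  rcases le_total ‖y‖ ‖x‖ with hyx | hxy_le
  · exact hell.inner_sub_ge_of_nonneg_of_norm_le ha hq hν hxy hyx
  · have := hell.inner_sub_ge_of_nonneg_of_norm_le ha hq hν (fun hs h => hxy hs h.symm) hxy_le
    rwa [add_right_comm, norm_sub_rev, ← neg_sub x y, ← neg_sub (a x), inner_neg_neg] at this

lemma inner_sub_ge (hell : IsPLaplacianElliptic a s q ν) (ha : ContDiff ℝ 1 a) (hν : 0 ≤ ν)
    (hxy : s = 0 → ¬(x = 0 ∧ y = 0)) :
    min ν (ν / (4 * 8 ^ q)) * (s ^ 2 + ‖x‖ ^ 2 + ‖y‖ ^ 2) ^ q * ‖x - y‖ ^ 2 ≤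
      ⟪a x - a y, x - y⟫ := by
  rcases le_total q 0 with hq | hq
  · exact le_trans (by gcongr; exact min_le_left _ _) (hell.inner_sub_ge_of_nonpos ha hq hν hxy)
  · exact le_trans (by gcongr; exact min_le_right _ _) (hell.inner_sub_ge_of_nonneg ha hq hν hxy)

end IsPLaplacianElliptic

theorem monotonicity_estimate_general (n : ℕ) (p ν : ℝ) (hν : 0 < ν) :
    ∃ c : ℝ, 0 < c ∧
      ∀ s : ℝ, s ∈ Icc (0:ℝ) 1 →
        ∀ a : EuclideanSpace ℝ (Fin n) → EuclideanSpace ℝ (Fin n), ContDiff ℝ 1 a →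
          (∀ ξ lam : EuclideanSpace ℝ (Fin n), (s = 0 → ξ ≠ 0) →
            ν * (s^2 + ‖ξ‖^2) ^ ((p-2)/2) * ‖lam‖^2 ≤ (inner ℝ (fderiv ℝ a ξ lam) lam : ℝ)) →
          ∀ ξ₁ ξ₂ : EuclideanSpace ℝ (Fin n), (s = 0 → ¬(ξ₁ = 0 ∧ ξ₂ = 0)) →
            (1/c) * (s^2 + ‖ξ₁‖^2 + ‖ξ₂‖^2) ^ ((p-2)/2) * ‖ξ₁ - ξ₂‖^2
              ≤ (inner ℝ (a ξ₁ - a ξ₂) (ξ₁ - ξ₂) : ℝ) := by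
  refine ⟨1 / min ν (ν / (4 * 8 ^ ((p - 2) / 2))), by positivity,
    fun s _ a ha hell ξ₁ ξ₂ hξ => ?_⟩
  rw [one_div_one_div]
  exact IsPLaplacianElliptic.inner_sub_ge hell ha hν.le hξ

/-- Classical monotonicity estimate for `C¹` vector fields with degenerate ellipticity of
`p`-Laplacian type. -/
theorem monotonicity_estimate (n : ℕ) (p ν : ℝ) (hp : 1 < p) (hν : 0 < ν) :
    ∃ c : ℝ, 0 < c ∧
      ∀ s : ℝ, s ∈ Icc (0:ℝ) 1 →
        ∀ a : EuclideanSpace ℝ (Fin n) → EuclideanSpace ℝ (Fin n), ContDiff ℝ 1 a →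
          (∀ ξ lam : EuclideanSpace ℝ (Fin n), (s = 0 → ξ ≠ 0) →
            ν * (s^2 + ‖ξ‖^2) ^ ((p-2)/2) * ‖lam‖^2 ≤ (inner ℝ (fderiv ℝ a ξ lam) lam : ℝ)) →
          ∀ ξ₁ ξ₂ : EuclideanSpace ℝ (Fin n), (s = 0 → ¬(ξ₁ = 0 ∧ ξ₂ = 0)) →
            (1/c) * (s^2 + ‖ξ₁‖^2 + ‖ξ₂‖^2) ^ ((p-2)/2) * ‖ξ₁ - ξ₂‖^2
              ≤ (inner ℝ (a ξ₁ - a ξ₂) (ξ₁ - ξ₂) : ℝ) :=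
  monotonicity_estimate_general n p ν hν
end

section
/- Let (X, μ) be a measure space, Q ⊆ X measurable with 0 < μ(Q) < ∞, g : Q → [0,∞) measurable, λ > 0, p > 0, ε > 0, and suppose (λ/2)^p ≤ (1/μ(Q)) ∫_Q g^p dμ and (1/μ(Q)) ∫_Q g^{p(1+ε)} dμ ≤ K λ^{p(1+ε)} for some K ≥ 1. Then μ(Q) ≤ c(p, ε, K) · μ({x ∈ Q : g(x) > λ/4}), where c(p, ε, K) = (4^p K / (2^p − 1))^{(1+ε)/ε} · 2^{p(1+ε)/ε} (any explicit constant depending only on p, ε, K suffices). -/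
/-!
Cut `f` at the heights `λ/4` and `λM`. Below `λ/4` the function contributes at most `(λ/4)^p μ(Q)`
to `∫_Q f^p`; between the two heights at most `(λM)^p` times the measure of the superlevel set;
above `λM` we have `f^p ≤ (λM)^{-pε} f^{p(1+ε)}`, so the reverse Hölder bound makes that part at most
`K M^{-pε} λ^p μ(Q)`. Choosing `M` so large that `(1/4)^p + K M^{-pε} < (1/2)^p`, the lower bound
`(λ/2)^p μ(Q) ≤ ∫_Q f^p` forces the superlevel set to carry a fixed fraction of `μ(Q)`.
-/

open MeasureTheory ENNReal Filter Topology

namespace ENNReal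

theorem rpow_le_rpow_add_rpow_neg_mul_rpow_add {p q : ℝ} (hp : 0 < p) (hq : 0 ≤ q) {b : ℝ≥0∞}
    (hb : b ≠ ⊤) (t : ℝ≥0∞) : t ^ p ≤ b ^ p + b ^ (-q) * t ^ (p + q) := by
  rcases le_or_gt t b with htb | hbt
  · exact (rpow_le_rpow htb hp.le).trans le_self_add
  refine le_add_left ?_
  rcases eq_or_ne t ⊤ with rfl | ht
  · have hb' : b ^ (-q) ≠ 0 := by simp [rpow_eq_zero_iff, hb, hq]
    rw [top_rpow_of_pos (y := p + q) (by linarith), mul_top hb']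
    exact le_top
  calc t ^ p = t ^ (-q) * t ^ (p + q) := by
        rw [← rpow_add _ _ (zero_le.trans_lt hbt).ne' ht]
        ring_nf
    _ ≤ b ^ (-q) * t ^ (p + q) := by
        refine mul_le_mul_left ?_ _
        rw [rpow_neg, rpow_neg]
        exact ENNReal.inv_le_inv.mpr (rpow_le_rpow hbt.le hq)

theorem exists_add_mul_rpow_neg_lt {a b K : ℝ≥0∞} {q : ℝ} (hq : 0 < q) (hK : K ≠ ⊤) (hab : a < b) :
    ∃ M : ℝ≥0∞, M ≠ ⊤ ∧ a + K * M ^ (-q) < b := by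
  have hlim : Tendsto (fun n : ℕ ↦ a + K * (n : ℝ≥0∞) ^ (-q)) atTop (𝓝 (a + K * ⊤ ^ (-q))) :=
    tendsto_const_nhds.add <| ENNReal.Tendsto.const_mul
      ((continuous_rpow_const.tendsto ⊤).comp tendsto_nat_nhds_top) (Or.inr hK)
  rw [top_rpow_of_neg (neg_neg_of_pos hq), mul_zero, add_zero] at hlim
  obtain ⟨n, hn⟩ := (hlim.eventually (gt_mem_nhds hab)).exists
  exact ⟨n, natCast_ne_top n, hn⟩

theorem le_inv_sub_mul_of_mul_le_mul_add {x y m z : ℝ≥0∞} (hyx : y < x) (hx : x ≠ ⊤) (hm : m ≠ ⊤)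
    (h : x * m ≤ y * m + z) : m ≤ (x - y)⁻¹ * z := by
  rw [← ENNReal.div_eq_inv_mul, ENNReal.le_div_iff_mul_le (Or.inl (tsub_pos_of_lt hyx).ne') (Or.inl (sub_ne_top hx)), mul_comm,
    ENNReal.sub_mul fun _ _ ↦ hm]
  exact tsub_le_iff_left.mpr h

end ENNReal

section

variable {X : Type*} [MeasurableSpace X]

theorem setLIntegral_rpow_le (μ : Measure X) (Q : Set X) {f : X → ℝ≥0∞} (hf : Measurable f)
    {p q : ℝ} (hp : 0 < p) (hq : 0 ≤ q) (a : ℝ≥0∞) {b : ℝ≥0∞} (hb : b ≠ ⊤) :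
    ∫⁻ x in Q, f x ^ p ∂μ ≤
      a ^ p * μ Q + b ^ p * μ ({x | a < f x} ∩ Q) + b ^ (-q) * ∫⁻ x in Q, f x ^ (p + q) ∂μ := by
  have hS : MeasurableSet {x | a < f x} := measurableSet_lt measurable_const hf
  have hpointwise : ∀ x, f x ^ p ≤
      a ^ p + {x | a < f x}.indicator (fun _ ↦ b ^ p) x + b ^ (-q) * f x ^ (p + q) := by
    intro x
    by_cases hx : a < f x
    · rw [Set.indicator_of_mem (show x ∈ {x | a < f x} from hx), add_assoc]
      exact (rpow_le_rpow_add_rpow_neg_mul_rpow_add hp hq hb (f x)).trans le_add_self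
    · exact (rpow_le_rpow (not_lt.mp hx) hp.le).trans (le_self_add.trans le_self_add)
  calc ∫⁻ x in Q, f x ^ p ∂μ
      ≤ ∫⁻ x in Q, a ^ p + {x | a < f x}.indicator (fun _ ↦ b ^ p) x
          + b ^ (-q) * f x ^ (p + q) ∂μ := lintegral_mono hpointwise
    _ = _ := by
      rw [lintegral_add_right _ ((hf.pow_const _).const_mul _), lintegral_add_left measurable_const,
        lintegral_const_mul _ (hf.pow_const _), setLIntegral_const, lintegral_indicator_const hS,
        Measure.restrict_apply hS]

theorem measure_le_mul_measure_superlevel_inter (μ : Measure X) (Q : Set X) (hQ : μ Q ≠ ⊤)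
    {f : X → ℝ≥0∞} (hf : Measurable f) {p q : ℝ} (hp : 0 < p) (hq : 0 ≤ q) {K M : ℝ≥0∞}
    (hM : M ≠ ⊤) (hKM : (4⁻¹) ^ p + K * M ^ (-q) < (2⁻¹) ^ p) {L : ℝ≥0∞} (hL₀ : L ≠ 0)
    (hL : L ≠ ⊤) (hlower : (L / 2) ^ p * μ Q ≤ ∫⁻ x in Q, f x ^ p ∂μ)
    (hupper : ∫⁻ x in Q, f x ^ (p + q) ∂μ ≤ K * L ^ (p + q) * μ Q) :
    μ Q ≤ ((2⁻¹) ^ p - ((4⁻¹) ^ p + K * M ^ (-q)))⁻¹ * M ^ p * μ ({x | L / 4 < f x} ∩ Q) := by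
  have hLp : L ^ (-q) * L ^ (p + q) = L ^ p := by
    rw [← rpow_add _ _ hL₀ hL]
    ring_nf
  have key : L ^ p * ((2⁻¹) ^ p * μ Q) ≤
      L ^ p * (((4⁻¹) ^ p + K * M ^ (-q)) * μ Q + M ^ p * μ ({x | L / 4 < f x} ∩ Q)) :=
    calc L ^ p * ((2⁻¹) ^ p * μ Q) = (L / 2) ^ p * μ Q := by
          rw [div_eq_mul_inv, mul_rpow_of_nonneg _ _ hp.le, mul_assoc]
      _ ≤ ∫⁻ x in Q, f x ^ p ∂μ := hlower
      _ ≤ (L / 4) ^ p * μ Q + (L * M) ^ p * μ ({x | L / 4 < f x} ∩ Q)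
            + (L * M) ^ (-q) * ∫⁻ x in Q, f x ^ (p + q) ∂μ :=
          setLIntegral_rpow_le μ Q hf hp hq _ (mul_ne_top hL hM)
      _ ≤ (L / 4) ^ p * μ Q + (L * M) ^ p * μ ({x | L / 4 < f x} ∩ Q)
            + (L * M) ^ (-q) * (K * L ^ (p + q) * μ Q) := by gcongr
      _ = _ := by
          rw [div_eq_mul_inv, mul_rpow_of_nonneg _ _ hp.le, mul_rpow_of_nonneg _ _ hp.le,
            mul_rpow_of_ne_top hL hM, ← hLp]
          ring
  have hcancel := (ENNReal.mul_le_mul_iff_right (rpow_pos (pos_iff_ne_zero.mpr hL₀) hL).ne'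
    (rpow_ne_top_of_nonneg hp.le hL)).mp key
  rw [mul_assoc]
  exact le_inv_sub_mul_of_mul_le_mul_add hKM (rpow_ne_top_of_nonneg hp.le (by simp)) hQ hcancel

end

theorem density_estimate_first_alternative_general (p ε K : ℝ) (hp : 0 < p) (hε : 0 < ε) :
    ∃ c : ℝ≥0∞, c ≠ ⊤ ∧
      ∀ (X : Type) [MeasurableSpace X] (μ : Measure X) (Q : Set X),
        MeasurableSet Q → 0 < μ Q → μ Q < ⊤ →
        ∀ g : X → ℝ, Measurable g → (∀ x, 0 ≤ g x) →
        ∀ lam : ℝ, 0 < lam →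
        ENNReal.ofReal (lam/2) ^ p ≤ (μ Q)⁻¹ * ∫⁻ x in Q, ENNReal.ofReal (g x) ^ p ∂μ →
        (μ Q)⁻¹ * ∫⁻ x in Q, ENNReal.ofReal (g x) ^ (p*(1+ε)) ∂μ
          ≤ ENNReal.ofReal K * ENNReal.ofReal lam ^ (p*(1+ε)) →
        μ Q ≤ c * μ {x | x ∈ Q ∧ lam/4 < g x} := by
  obtain ⟨M, hM, hKM⟩ := exists_add_mul_rpow_neg_lt (mul_pos hp hε) (ofReal_ne_top (r := K))
    (rpow_lt_rpow (by norm_num : (4 : ℝ≥0∞)⁻¹ < 2⁻¹) hp)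
  refine ⟨_, mul_ne_top (inv_ne_top.mpr (tsub_pos_of_lt hKM).ne') (rpow_ne_top_of_nonneg hp.le hM),
    fun X _ μ Q _ hQ₀ hQ g hg _ lam hlam hlower hupper ↦ ?_⟩
  have hquarter : ENNReal.ofReal lam / 4 = ENNReal.ofReal (lam / 4) := by
    rw [ofReal_div_of_pos four_pos, ofReal_ofNat]
  have hsuper : {x | x ∈ Q ∧ lam / 4 < g x} =
      {x | ENNReal.ofReal lam / 4 < ENNReal.ofReal (g x)} ∩ Q := by
    ext x
    simp only [Set.mem_ofPred_eq, Set.mem_inter_iff, hquarter,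
      ofReal_lt_ofReal_iff_of_nonneg (by positivity : 0 ≤ lam / 4), and_comm]
  rw [hsuper]
  rw [← ENNReal.div_eq_inv_mul, ENNReal.le_div_iff_mul_le (Or.inl hQ₀.ne') (Or.inl hQ.ne),
    ofReal_div_of_pos two_pos, ofReal_ofNat] at hlower
  rw [ENNReal.inv_mul_le_iff hQ₀.ne' hQ.ne, mul_one_add, mul_comm (μ Q)] at hupper
  exact measure_le_mul_measure_superlevel_inter μ Q hQ.ne hg.ennreal_ofReal hp (mul_pos hp hε).le
    hM hKM (by simpa using hlam) ofReal_ne_top hlower hupper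

/-- Abstract density estimate (first alternative of the exit-time argument): if the `p`-average
of `g` on `Q` is at least `(λ/2)^p` and `g` satisfies a reverse Hölder bound at exponent
`p(1+ε)`, then the superlevel set `{g > λ/4}` occupies a definite fraction of `Q`. -/
theorem density_estimate_first_alternative (p ε K : ℝ) (hp : 0 < p) (hε : 0 < ε) (hK : 1 ≤ K) :
    ∃ c : ℝ≥0∞, c ≠ ⊤ ∧
      ∀ (X : Type) [MeasurableSpace X] (μ : Measure X) (Q : Set X),
        MeasurableSet Q → 0 < μ Q → μ Q < ⊤ →
        ∀ g : X → ℝ, Measurable g → (∀ x, 0 ≤ g x) →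
        ∀ lam : ℝ, 0 < lam →
        ENNReal.ofReal (lam/2) ^ p ≤ (μ Q)⁻¹ * ∫⁻ x in Q, ENNReal.ofReal (g x) ^ p ∂μ →
        (μ Q)⁻¹ * ∫⁻ x in Q, ENNReal.ofReal (g x) ^ (p*(1+ε)) ∂μ
          ≤ ENNReal.ofReal K * ENNReal.ofReal lam ^ (p*(1+ε)) →
        μ Q ≤ c * μ {x | x ∈ Q ∧ lam/4 < g x} :=
  density_estimate_first_alternative_general p ε K hp hε
end

section
/- Let μ be a finite measure on a set Q, Ψ : Q → [0,∞) measurable, γ > η > 0, M ≥ 1, λ > 0, τ > 0, and suppose (λ/2)^η ≤ M^η (1/μ(Q)) ∫_Q Ψ^η dμ with ∫_Q Ψ^η dμ estimated via the Marcinkiewicz Hölder inequality. If τ > 0 is chosen so that 2^{−η} − M^η τ^η (2γ−η)/(γ−η) ≥ 4^{−η}, then μ(Q) ≤ c(γ, η) (τλ)^{−γ} sup_{μ' ≥ τλ} (μ')^γ · μ({x ∈ Q : Ψ(x) > μ'}). -/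
/-!
Write `b = τλ` and let `A` be the tail Marcinkiewicz quantity. In the layer-cake formula
`∫_Q Ψ^η = η ∫_0^∞ t^{η-1} μ(Q ∩ {Ψ > t}) dt`, split the `t`-integral at `b`: below `b` the
integrand is at most `t^{η-1} μ(Q)`, above `b` it is at most `t^{η-1-γ} A`, so
`∫_Q Ψ^η ≤ b^η μ(Q) + η/(γ-η) b^{η-γ} A`. The hypothesis bounds `(λ/2M)^η μ(Q)` by this
integral, and the choice of `τ` gives `b^η + (λ/4M)^η ≤ (λ/2M)^η`; as `μ(Q) < ∞` the term
`b^η μ(Q)` can be absorbed, leaving `μ(Q) ≤ (4M/λ)^η η/(γ-η) b^{η-γ} A`, which is at most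
`4^η η/(γ-η) b^{-γ} A` because `M^η τ^η ≤ 1`.
-/

open MeasureTheory ENNReal Set

theorem lintegral_Ioc_zero_rpow_sub_one {η b : ℝ} (hη : 0 < η) (hb : 0 ≤ b) :
    ∫⁻ t in Ioc 0 b, ENNReal.ofReal (t ^ (η - 1)) = ENNReal.ofReal (b ^ η / η) := by
  have hint : IntegrableOn (fun t : ℝ ↦ t ^ (η - 1)) (Ioc 0 b) := by
    simpa [intervalIntegrable_iff, uIoc_of_le hb] using
      intervalIntegral.intervalIntegrable_rpow' (a := 0) (b := b) (by linarith : -1 < η - 1)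
  rw [← ofReal_integral_eq_lintegral_ofReal hint
    (ae_restrict_of_forall_mem measurableSet_Ioc fun t ht ↦ Real.rpow_nonneg ht.1.le _),
    ← intervalIntegral.integral_of_le hb, integral_rpow (Or.inl (by linarith)),
    Real.zero_rpow (by linarith)]
  norm_num

theorem lintegral_Ioi_rpow_of_lt {p b : ℝ} (hp : p < -1) (hb : 0 < b) :
    ∫⁻ t in Ioi b, ENNReal.ofReal (t ^ p) = ENNReal.ofReal (-b ^ (p + 1) / (p + 1)) := by
  rw [← ofReal_integral_eq_lintegral_ofReal (integrableOn_Ioi_rpow_of_lt hp hb)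
    (ae_restrict_of_forall_mem measurableSet_Ioi fun t ht ↦ Real.rpow_nonneg (hb.trans ht).le _),
    integral_Ioi_rpow_of_lt hp hb]

namespace ENNReal

theorem mul_ofReal_rpow_le_of_ofReal_rpow_mul_le {s A : ℝ≥0∞} {t γ p : ℝ} (ht : 0 < t)
    (h : ENNReal.ofReal t ^ γ * s ≤ A) :
    s * ENNReal.ofReal (t ^ p) ≤ A * ENNReal.ofReal (t ^ (p - γ)) := by
  have hs : s ≤ ENNReal.ofReal (t ^ (-γ)) * A := by
    rw [Real.rpow_neg ht.le, ofReal_inv_of_pos (by positivity),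
      ← mul_le_iff_le_inv (ofReal_pos.2 (by positivity)).ne' ofReal_ne_top,
      ← ofReal_rpow_of_pos ht]
    exact h
  calc s * ENNReal.ofReal (t ^ p)
      ≤ ENNReal.ofReal (t ^ (-γ)) * A * ENNReal.ofReal (t ^ p) := by gcongr
    _ = A * ENNReal.ofReal (t ^ (p - γ)) := by
      rw [mul_right_comm, ← ofReal_mul (by positivity), ← Real.rpow_add ht, mul_comm, neg_add_eq_sub]

theorem le_ofReal_inv_mul_of_add_mul_le {q D : ℝ≥0∞} {a c : ℝ} (hq : q ≠ ⊤) (ha : 0 < a)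
    (hc : 0 ≤ c) (h : ENNReal.ofReal (a + c) * q ≤ ENNReal.ofReal c * q + D) :
    q ≤ ENNReal.ofReal a⁻¹ * D := by
  rw [ofReal_add ha.le hc, add_mul, add_comm] at h
  rw [ofReal_inv_of_pos ha, ← mul_le_iff_le_inv (by simpa using ha) ofReal_ne_top]
  exact (ENNReal.add_le_add_iff_left (mul_ne_top ofReal_ne_top hq)).1 h

end ENNReal

section LayerCake

variable {X : Type*} [MeasurableSpace X] {ν : Measure X} {f : X → ℝ} {η γ b : ℝ} {A : ℝ≥0∞}

theorem lintegral_rpow_le_of_rpow_mul_meas_lt_le (hf_nn : 0 ≤ᵐ[ν] f) (hf : AEMeasurable f ν)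
    (hη : 0 < η) (hγ : η < γ) (hb : 0 < b)
    (hA : ∀ t, b < t → ENNReal.ofReal t ^ γ * ν {x | t < f x} ≤ A) :
    ∫⁻ x, ENNReal.ofReal (f x) ^ η ∂ν ≤
      ENNReal.ofReal (b ^ η) * ν univ + ENNReal.ofReal (η / (γ - η) * b ^ (η - γ)) * A := by
  have hmeas : ∀ p : ℝ, Measurable fun t : ℝ ↦ ENNReal.ofReal (t ^ p) := fun p ↦ by fun_prop
  have hlow : ∫⁻ t in Ioc 0 b, ν {x | t < f x} * ENNReal.ofReal (t ^ (η - 1))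
      ≤ ν univ * ENNReal.ofReal (b ^ η / η) := by
    rw [← lintegral_Ioc_zero_rpow_sub_one hη hb.le, ← lintegral_const_mul _ (hmeas _)]
    gcongr
    exact subset_univ _
  have hhigh : ∫⁻ t in Ioi b, ν {x | t < f x} * ENNReal.ofReal (t ^ (η - 1))
      ≤ A * ENNReal.ofReal (b ^ (η - γ) / (γ - η)) := by
    calc ∫⁻ t in Ioi b, ν {x | t < f x} * ENNReal.ofReal (t ^ (η - 1))
        ≤ ∫⁻ t in Ioi b, A * ENNReal.ofReal (t ^ (η - 1 - γ)) :=
          setLIntegral_mono (by fun_prop) fun t ht ↦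
            mul_ofReal_rpow_le_of_ofReal_rpow_mul_le (hb.trans ht) (hA t ht)
      _ = A * ENNReal.ofReal (b ^ (η - γ) / (γ - η)) := by
          rw [lintegral_const_mul _ (hmeas _), lintegral_Ioi_rpow_of_lt (by linarith) hb,
            show η - 1 - γ + 1 = η - γ by ring, neg_div, ← div_neg, neg_sub]
  calc ∫⁻ x, ENNReal.ofReal (f x) ^ η ∂ν
      = ENNReal.ofReal η * ∫⁻ t in Ioi 0, ν {x | t < f x} * ENNReal.ofReal (t ^ (η - 1)) := by
        rw [← lintegral_rpow_eq_lintegral_meas_lt_mul ν hf_nn hf hη]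
        refine lintegral_congr_ae ?_
        filter_upwards [hf_nn] with x hx using ofReal_rpow_of_nonneg hx hη.le
    _ ≤ ENNReal.ofReal η * (ν univ * ENNReal.ofReal (b ^ η / η)
          + A * ENNReal.ofReal (b ^ (η - γ) / (γ - η))) := by
        rw [← Ioc_union_Ioi_eq_Ioi hb.le,
          lintegral_union measurableSet_Ioi (Ioc_disjoint_Ioi le_rfl)]
        gcongr
    _ = _ := by
        rw [mul_add, ← mul_assoc, ← mul_assoc, mul_right_comm, ← ofReal_mul hη.le,
          mul_right_comm, ← ofReal_mul hη.le]
        congr 3 <;> field_simp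

theorem measure_univ_le_of_mul_le_lintegral_rpow {δ : ℝ} (hν : ν univ ≠ ⊤)
    (hf_nn : 0 ≤ᵐ[ν] f) (hf : AEMeasurable f ν) (hη : 0 < η) (hγ : η < γ) (hb : 0 < b)
    (hδ : 0 < δ) (hA : ∀ t, b < t → ENNReal.ofReal t ^ γ * ν {x | t < f x} ≤ A)
    (h : ENNReal.ofReal (b ^ η + δ) * ν univ ≤ ∫⁻ x, ENNReal.ofReal (f x) ^ η ∂ν) :
    ν univ ≤ ENNReal.ofReal (δ⁻¹ * (η / (γ - η) * b ^ (η - γ))) * A := by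
  rw [ofReal_mul (inv_nonneg.2 hδ.le), mul_assoc]
  refine le_ofReal_inv_mul_of_add_mul_le (c := b ^ η) hν hδ (by positivity) ?_
  rw [add_comm]
  exact h.trans (lintegral_rpow_le_of_rpow_mul_meas_lt_le hf_nn hf hη hγ hb hA)

end LayerCake

section DensityCondition

variable {η M τ lam : ℝ}

theorem rpow_add_rpow_le_of_le_sub_mul {γ : ℝ} (hη : 0 ≤ η) (hγ : η < γ) (hM : 0 ≤ M) (hτ : 0 ≤ τ)
    (h : (4 : ℝ) ^ (-η) ≤ 2 ^ (-η) - M ^ η * τ ^ η * ((2 * γ - η) / (γ - η))) :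
    (4 : ℝ) ^ (-η) + M ^ η * τ ^ η ≤ 2 ^ (-η) := by
  have hK : 1 ≤ (2 * γ - η) / (γ - η) := by rw [le_div_iff₀ (by linarith)]; linarith
  nlinarith [show 0 ≤ M ^ η * τ ^ η by positivity]

theorem mul_rpow_add_div_four_rpow_le (hM : 0 < M) (hτ : 0 ≤ τ) (hlam : 0 ≤ lam)
    (h : (4 : ℝ) ^ (-η) + M ^ η * τ ^ η ≤ 2 ^ (-η)) :
    (τ * lam) ^ η + (lam / 4) ^ η / M ^ η ≤ (lam / 2) ^ η / M ^ η := by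
  have hdiv : ∀ a : ℝ, 0 < a → (lam / a) ^ η = a ^ (-η) * lam ^ η := fun a ha ↦ by
    rw [Real.div_rpow hlam ha.le, Real.rpow_neg ha.le, div_eq_inv_mul]
  have hMη : 0 < M ^ η := by positivity
  rw [hdiv 4 (by norm_num), hdiv 2 (by norm_num), Real.mul_rpow hτ hlam, ← sub_nonneg]
  have hgap : 2 ^ (-η) * lam ^ η / M ^ η - (τ ^ η * lam ^ η + 4 ^ (-η) * lam ^ η / M ^ η)
      = lam ^ η / M ^ η * (2 ^ (-η) - (4 ^ (-η) + M ^ η * τ ^ η)) := by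
    field_simp
    ring
  rw [hgap]
  exact mul_nonneg (by positivity) (sub_nonneg.2 h)

theorem inv_div_four_rpow_mul_le {γ K : ℝ} (hη : 0 < η) (hM : 0 < M) (hτ : 0 < τ)
    (hlam : 0 < lam) (hK : 0 ≤ K) (h : (4 : ℝ) ^ (-η) + M ^ η * τ ^ η ≤ 2 ^ (-η)) :
    ((lam / 4) ^ η / M ^ η)⁻¹ * (K * (τ * lam) ^ (η - γ)) ≤ 4 ^ η * K * (τ * lam) ^ (-γ) := by
  have hb : 0 < τ * lam := mul_pos hτ hlam
  have hMτ : M ^ η * τ ^ η ≤ 1 := by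
    linarith [Real.rpow_le_one_of_one_le_of_nonpos one_le_two (neg_nonpos.2 hη.le),
      show (0 : ℝ) < 4 ^ (-η) by positivity]
  have hfactor : ((lam / 4) ^ η / M ^ η)⁻¹ * (K * (τ * lam) ^ (η - γ))
      = M ^ η * τ ^ η * (4 ^ η * K * (τ * lam) ^ (-γ)) := by
    rw [Real.div_rpow hlam.le (by norm_num), Real.rpow_sub hb, Real.rpow_neg hb.le,
      Real.mul_rpow hτ.le hlam.le]
    field_simp
  rw [hfactor]
  exact mul_le_of_le_one_left (by positivity) hMτ

end DensityCondition

/-- Weak-type (Marcinkiewicz) density estimate used in the endpoint case `q = ∞`: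
if the `η`-average of `Ψ` over `Q` dominates `(λ/(2M))^η` and `τ` is chosen so that
`2^{-η} - M^η τ^η (2γ-η)/(γ-η) ≥ 4^{-η}`, then `μ(Q)` is controlled by the tail
Marcinkiewicz quantity. -/
theorem density_estimate_marcinkiewicz (γ η : ℝ) (hη : 0 < η) (hγ : η < γ) :
    ∃ c : ℝ≥0∞, c ≠ ⊤ ∧
      ∀ (X : Type) [MeasurableSpace X] (μ : Measure X) (Q : Set X),
        MeasurableSet Q → 0 < μ Q → μ Q < ⊤ →
        ∀ Ψ : X → ℝ, Measurable Ψ → (∀ x, 0 ≤ Ψ x) →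
        ∀ M lam τ : ℝ, 1 ≤ M → 0 < lam → 0 < τ →
        (4:ℝ) ^ (-η) ≤ (2:ℝ) ^ (-η) - M^η * τ^η * ((2*γ - η)/(γ - η)) →
        ENNReal.ofReal (lam/2) ^ η
          ≤ ENNReal.ofReal M ^ η * ((μ Q)⁻¹ * ∫⁻ x in Q, ENNReal.ofReal (Ψ x) ^ η ∂μ) →
        μ Q ≤ c * ENNReal.ofReal (τ*lam) ^ (-γ) *
          ⨆ m ∈ Ici (τ*lam), ENNReal.ofReal m ^ γ * μ {x | x ∈ Q ∧ m < Ψ x} := by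
  refine ⟨ENNReal.ofReal (4 ^ η * (η / (γ - η))), ofReal_ne_top, ?_⟩
  intro X _ μ Q hQ hQ0 hQtop Ψ hΨ hΨ0 M lam τ hM hlam hτ hcond hmain
  have hM0 : 0 < M := one_pos.trans_le hM
  have hsmall := rpow_add_rpow_le_of_le_sub_mul hη.le hγ hM0.le hτ.le hcond
  have hA : ∀ t, τ * lam < t → ENNReal.ofReal t ^ γ * μ.restrict Q {x | t < Ψ x}
      ≤ ⨆ m ∈ Ici (τ * lam), ENNReal.ofReal m ^ γ * μ {x | x ∈ Q ∧ m < Ψ x} := fun t ht ↦ by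
    rw [Measure.restrict_apply' hQ, inter_comm]
    exact le_iSup₂ (f := fun m _ ↦ ENNReal.ofReal m ^ γ * μ {x | x ∈ Q ∧ m < Ψ x}) t ht.le
  have havg : ENNReal.ofReal ((τ * lam) ^ η + (lam / 4) ^ η / M ^ η) * μ.restrict Q univ
      ≤ ∫⁻ x in Q, ENNReal.ofReal (Ψ x) ^ η ∂μ := by
    rw [Measure.restrict_apply_univ]
    calc _ ≤ ENNReal.ofReal ((lam / 2) ^ η / M ^ η) * μ Q := by
          gcongr
          exact mul_rpow_add_div_four_rpow_le hM0 hτ.le hlam.le hsmall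
      _ ≤ _ := by
          rw [ofReal_div_of_pos (by positivity), ← ofReal_rpow_of_pos (by positivity),
            ← ofReal_rpow_of_pos hM0, mul_comm, ENNReal.mul_le_iff_le_inv hQ0.ne' hQtop.ne]
          exact div_le_of_le_mul' hmain
  calc μ Q = μ.restrict Q univ := (Measure.restrict_apply_univ Q).symm
    _ ≤ ENNReal.ofReal (((lam / 4) ^ η / M ^ η)⁻¹ * (η / (γ - η) * (τ * lam) ^ (η - γ))) * _ :=
        measure_univ_le_of_mul_le_lintegral_rpow (by simpa using hQtop.ne) (ae_of_all _ hΨ0)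
          hΨ.aemeasurable hη hγ (mul_pos hτ hlam) (by positivity : 0 < (lam / 4) ^ η / M ^ η)
          hA havg
    _ ≤ ENNReal.ofReal (4 ^ η * (η / (γ - η)) * (τ * lam) ^ (-γ)) * _ := by
        gcongr ENNReal.ofReal ?_ * _
        exact inv_div_four_rpow_mul_le hη hM0 hτ hlam (div_nonneg hη.le (sub_pos.2 hγ).le) hsmall
    _ = _ := by
        rw [ofReal_mul (by positivity), ofReal_rpow_of_pos (mul_pos hτ hlam)]
end
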